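/- Let V be a vector space over ℂ and let χ : V → V be an antilinear map. Let S be an ℝ-submodule of V such that every v ∈ S satisfies χ(v) ∈ ℂ·v, and suppose S contains two vectors that are linearly independent over ℂ. Then there exists a single scalar β ∈ ℂ with χ(v) = β·v for all v ∈ S. If moreover χ∘χ = id, then β·β̄ = 1. -/
import Mathlib


/-- Let `V` be a complex vector space and `χ : V → V` an antilinear map
(additive with `χ (c • v) = conj c • χ v`).  Let `S` be an `ℝ`-submodule of `V` such that
every `v ∈ S` satisfies `χ v ∈ ℂ • v`, and suppose `S` contains two vectors that are
`ℂ`-linearly independent.  Then there is a single scalar `β ∈ ℂ` with `χ v = β • v` for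
all `v ∈ S`; and if moreover `χ ∘ χ = id`, then `β * β̄ = 1`. -/
theorem stmt1 {V : Type*} [AddCommGroup V] [Module ℂ V] [Module ℝ V]
    [IsScalarTower ℝ ℂ V]
    (χ : V → V)
    (hadd : ∀ v w : V, χ (v + w) = χ v + χ w)
    (hantilinear : ∀ (c : ℂ) (v : V), χ (c • v) = (starRingEnd ℂ c) • χ v)
    (S : Submodule ℝ V)
    (hS : ∀ v ∈ S, ∃ c : ℂ, χ v = c • v)
    (hind : ∃ v w : V, v ∈ S ∧ w ∈ S ∧ LinearIndependent ℂ ![v, w]) :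
    ∃ β : ℂ, (∀ v ∈ S, χ v = β • v) ∧
      ((∀ v : V, χ (χ v) = v) → β * (starRingEnd ℂ β) = 1) := by
  obtain ⟨v, w, hv, hw, hvw⟩ := hind
  have hv0 : v ≠ 0 := by have := hvw.ne_zero 0; simpa using this
  -- key: for a linearly independent pair in S, the eigenvalues agree
  have key : ∀ x ∈ S, ∀ y ∈ S, LinearIndependent ℂ ![x, y] →
      ∀ a b : ℂ, χ x = a • x → χ y = b • y → a = b := by
    intro x hx y hy hxy a b hax hby
    obtain ⟨c, hc⟩ := hS (x + y) (S.add_mem hx hy)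
    have h1 : (a - c) • x + (b - c) • y = 0 := by
      have h := hadd x y
      rw [hc, hax, hby] at h
      linear_combination (norm := module) -h
    obtain ⟨h2, h3⟩ := LinearIndependent.pair_iff.mp hxy _ _ h1
    linear_combination h2 - h3
  obtain ⟨a, ha⟩ := hS v hv
  obtain ⟨b, hb⟩ := hS w hw
  have hab : a = b := key v hv w hw hvw a b ha hb
  refine ⟨a, ?_, ?_⟩
  · intro u hu
    obtain ⟨d, hd⟩ := hS u hu
    by_cases hu0 : u = 0
    · have h0 : χ 0 = 0 := by
        have := hadd 0 0
        rw [add_zero] at this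
        exact add_left_cancel (this.symm.trans (add_zero _).symm)
      subst hu0; rw [h0, smul_zero]
    by_cases h1 : LinearIndependent ℂ ![u, v]
    · have := key u hu v hv h1 d a hd ha
      rw [hd, this]
    · -- since u ≠ 0 and ![u,v] dependent, v = c • u with c ≠ 0; then ![u,w] independent
      rw [LinearIndependent.pair_iff' hu0] at h1
      push_neg at h1
      obtain ⟨c, hc⟩ := h1
      have hc0 : c ≠ 0 := by rintro rfl; simp at hc; exact hv0 hc.symm
      have h2 : LinearIndependent ℂ ![u, w] := by
        rw [LinearIndependent.pair_iff' hu0]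
        intro e he
        have h3 : e • v + (-c) • w = 0 := by
          rw [← hc, ← he]
          module
        obtain ⟨_, h4⟩ := LinearIndependent.pair_iff.mp hvw _ _ h3
        exact hc0 (neg_eq_zero.mp h4)
      have := key u hu w hw h2 d b hd hb
      rw [hd, this, hab]
  · intro hinv
    have h5 : χ (χ v) = (a * starRingEnd ℂ a) • v := by
      rw [ha, hantilinear, ha, smul_smul, mul_comm]
    have h6 : (a * starRingEnd ℂ a - 1) • v + (0 : ℂ) • w = 0 := by
      rw [zero_smul, add_zero, sub_smul, one_smul, ← h5, hinv v, sub_self]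
    exact sub_eq_zero.mp (LinearIndependent.pair_iff.mp hvw _ _ h6).1
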